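/- The empirical Rademacher complexity of the hypothesis class 𝒢 = { (x,z) ↦ wᵀ(x + diag(1−z) Mᵀ x) : ‖w‖ ≤ Λ, ‖M‖_F ≤ γ } over any sample (x_1,z_1),…,(x_T,z_T) with ‖x_i‖ ≤ R and z_i ∈ {0,1}^d satisfies: (1/T)·E_σ[ sup_{w,M} | Σ_{i=1}^T σ_i wᵀ(x_i + diag(1−z_i) Mᵀ x_i) | ] ≤ (1 + γ√d) Λ R / √T. -/
import Mathlib


noncomputable section

/-- Euclidean norm on `ℝ^d`. -/
def enorm' {d : ℕ} (v : Fin d → ℝ) : ℝ := Real.sqrt (∑ i, v i ^ 2)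

/-- Frobenius norm of a `d × d` real matrix. -/
def frobNorm {d : ℕ} (M : Matrix (Fin d) (Fin d) ℝ) : ℝ :=
  Real.sqrt (∑ i, ∑ j, (M i j) ^ 2)

/-- The value `±1` of a Rademacher sign encoded by a boolean. -/
def sgn (b : Bool) : ℝ := if b then 1 else -1

lemma sgn_self_mul (b : Bool) : sgn b * sgn b = 1 := by cases b <;> simp [sgn]

lemma sgn_not (b : Bool) : sgn (!b) = - sgn b := by cases b <;> simp [sgn]

lemma sum_sgn_orth {T : ℕ} (i j : Fin T) :
    ∑ σ : Fin T → Bool, sgn (σ i) * sgn (σ j) = if i = j then (2:ℝ)^T else 0 := by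
  rcases eq_or_ne i j with rfl | hij
  · simp only [if_pos rfl, sgn_self_mul, Finset.sum_const, nsmul_eq_mul, mul_one]
    norm_num [Fintype.card_fun]
  · rw [if_neg hij]
    apply Finset.sum_involution (fun σ _ => Function.update σ i (!σ i))
    · intro σ _
      simp [Function.update_self, Function.update_of_ne (Ne.symm hij), sgn_not]
    · intro σ _ h hc
      have := congrFun hc i
      simp at this
    · intro σ _
      funext k
      rcases eq_or_ne k i with rfl | hk
      · simp
      · simp [Function.update_of_ne hk]
    · intro σ _
      exact Finset.mem_univ _

lemma sum_sq_sgn {T : ℕ} (a : Fin T → ℝ) :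
    ∑ σ : Fin T → Bool, (∑ i, sgn (σ i) * a i)^2 = 2^T * ∑ i, a i ^ 2 := by
  have h1 : ∀ σ : Fin T → Bool, (∑ i, sgn (σ i) * a i)^2
      = ∑ i, ∑ j, (a i * a j) * (sgn (σ i) * sgn (σ j)) := by
    intro σ
    rw [sq, Finset.sum_mul_sum]
    exact Finset.sum_congr rfl fun i _ => Finset.sum_congr rfl fun j _ => by ring
  simp only [h1]
  rw [Finset.sum_comm]
  have : ∀ i : Fin T, ∑ σ : Fin T → Bool, ∑ j, (a i * a j) * (sgn (σ i) * sgn (σ j))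
      = 2^T * a i ^ 2 := by
    intro i
    rw [Finset.sum_comm]
    have : ∀ j : Fin T, ∑ σ : Fin T → Bool, (a i * a j) * (sgn (σ i) * sgn (σ j))
        = if i = j then 2^T * a i ^2 else 0 := by
      intro j
      rw [← Finset.mul_sum, sum_sgn_orth]
      rcases eq_or_ne i j with rfl | h
      · simp; ring
      · simp [h]
    simp only [this, Finset.sum_ite_eq, Finset.mem_univ, if_pos]
  simp only [this, ← Finset.mul_sum]

lemma sum_sqrt_le_card {ι : Type*} [Fintype ι] (f : ι → ℝ) (hf : ∀ i, 0 ≤ f i) :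
    ∑ i, Real.sqrt (f i) ≤ Real.sqrt (Fintype.card ι) * Real.sqrt (∑ i, f i) := by
  have := Real.sum_mul_le_sqrt_mul_sqrt Finset.univ (fun _ : ι => (1:ℝ)) (fun i => Real.sqrt (f i))
  simpa [Real.sq_sqrt (hf _), Finset.card_univ] using this

lemma abs_sum_mul_le {ι : Type*} [Fintype ι] (f g : ι → ℝ) :
    |∑ i, f i * g i| ≤ Real.sqrt (∑ i, f i ^ 2) * Real.sqrt (∑ i, g i ^ 2) := by
  calc |∑ i, f i * g i| ≤ ∑ i, |f i * g i| := Finset.abs_sum_le_sum_abs _ _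
    _ = ∑ i, |f i| * |g i| := by simp [abs_mul]
    _ ≤ Real.sqrt (∑ i, |f i| ^ 2) * Real.sqrt (∑ i, |g i| ^ 2) :=
        Real.sum_mul_le_sqrt_mul_sqrt _ _ _
    _ = _ := by simp [sq_abs]

lemma sq_le_of_sqrt_le {a b : ℝ} (h0 : 0 ≤ a) (h : Real.sqrt a ≤ b) : a ≤ b ^ 2 := by
  nlinarith [Real.sq_sqrt h0, Real.sqrt_nonneg a]

lemma expand_identity {d T : ℕ} (x z : Fin T → Fin d → ℝ) (w : Fin d → ℝ)
    (M : Matrix (Fin d) (Fin d) ℝ) (σ : Fin T → Bool) :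
    (∑ i, sgn (σ i) * (∑ r, w r * (x i r + (1 - z i r) * ∑ s, M s r * x i s)))
    = (∑ r, w r * (∑ i, sgn (σ i) * x i r))
      + ∑ r, ∑ s, (w r * M s r) * (∑ i, sgn (σ i) * ((1 - z i r) * x i s)) := by
  have e1 : ∀ i : Fin T, sgn (σ i) * (∑ r, w r * (x i r + (1 - z i r) * ∑ s, M s r * x i s))
      = (∑ r, w r * (sgn (σ i) * x i r))
        + ∑ r, ∑ s, (w r * M s r) * (sgn (σ i) * ((1 - z i r) * x i s)) := by
    intro i
    rw [Finset.mul_sum, ← Finset.sum_add_distrib]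
    refine Finset.sum_congr rfl fun r _ => ?_
    simp only [mul_add, Finset.mul_sum]
    congr 1
    · ring
    · exact Finset.sum_congr rfl fun s _ => by ring
  simp only [e1]
  rw [Finset.sum_add_distrib]
  congr 1
  · rw [Finset.sum_comm]
    exact Finset.sum_congr rfl fun r _ => by rw [Finset.mul_sum]
  · rw [Finset.sum_comm]
    refine Finset.sum_congr rfl fun r _ => ?_
    rw [Finset.sum_comm]
    refine Finset.sum_congr rfl fun s _ => ?_
    rw [Finset.mul_sum]

lemma per_sigma {d T : ℕ} (x z : Fin T → Fin d → ℝ) (Λ γ : ℝ)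
    (w : Fin d → ℝ) (M : Matrix (Fin d) (Fin d) ℝ) (σ : Fin T → Bool)
    (hw : Real.sqrt (∑ r, w r ^ 2) ≤ Λ) (hM : Real.sqrt (∑ s, ∑ r, M s r ^ 2) ≤ γ) :
    |∑ i, sgn (σ i) * (∑ r, w r * (x i r + (1 - z i r) * ∑ s, M s r * x i s))|
      ≤ Λ * Real.sqrt (∑ r, (∑ i, sgn (σ i) * x i r) ^ 2)
        + Λ * γ * Real.sqrt (∑ r, ∑ s, (∑ i, sgn (σ i) * ((1 - z i r) * x i s)) ^ 2) := by
  have hΛ : 0 ≤ Λ := le_trans (Real.sqrt_nonneg _) hw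
  have hγ : 0 ≤ γ := le_trans (Real.sqrt_nonneg _) hM
  have hwsum : ∑ r, w r ^ 2 ≤ Λ ^ 2 := sq_le_of_sqrt_le (by positivity) hw
  rw [expand_identity]
  refine le_trans (abs_add_le _ _) (add_le_add ?_ ?_)
  · calc |∑ r, w r * (∑ i, sgn (σ i) * x i r)|
        ≤ Real.sqrt (∑ r, w r ^ 2) * Real.sqrt (∑ r, (∑ i, sgn (σ i) * x i r) ^ 2) :=
          abs_sum_mul_le _ _
      _ ≤ Λ * Real.sqrt (∑ r, (∑ i, sgn (σ i) * x i r) ^ 2) :=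
          mul_le_mul_of_nonneg_right hw (Real.sqrt_nonneg _)
  · set A : Fin d → Fin d → ℝ := fun r s => ∑ i, sgn (σ i) * ((1 - z i r) * x i s) with hA
    have step1 : ∑ r, ∑ s, (w r * M s r) * A r s
        = ∑ p : Fin d × Fin d, (w p.1 * A p.1 p.2) * M p.2 p.1 := by
      rw [Fintype.sum_prod_type]
      exact Finset.sum_congr rfl fun r _ => Finset.sum_congr rfl fun s _ => by ring
    rw [step1]
    refine le_trans (abs_sum_mul_le _ _) ?_
    have h2 : ∑ p : Fin d × Fin d, (M p.2 p.1) ^ 2 = ∑ s, ∑ r, M s r ^ 2 := by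
      rw [Fintype.sum_prod_type, Finset.sum_comm]
    have h3 : ∑ p : Fin d × Fin d, (A p.1 p.2) ^ 2
        = ∑ r, ∑ s, (∑ i, sgn (σ i) * ((1 - z i r) * x i s)) ^ 2 := by
      rw [Fintype.sum_prod_type]
    have h4 : ∑ p : Fin d × Fin d, (w p.1 * A p.1 p.2) ^ 2
        ≤ Λ ^ 2 * ∑ p : Fin d × Fin d, (A p.1 p.2) ^ 2 := by
      rw [Finset.mul_sum]
      refine Finset.sum_le_sum fun p _ => ?_
      have hwr : w p.1 ^ 2 ≤ Λ ^ 2 :=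
        le_trans (Finset.single_le_sum (fun r _ => sq_nonneg (w r)) (Finset.mem_univ p.1)) hwsum
      rw [mul_pow]
      exact mul_le_mul_of_nonneg_right hwr (sq_nonneg _)
    calc Real.sqrt (∑ p : Fin d × Fin d, (w p.1 * A p.1 p.2) ^ 2)
          * Real.sqrt (∑ p : Fin d × Fin d, (M p.2 p.1) ^ 2)
        ≤ Real.sqrt (Λ ^ 2 * ∑ p : Fin d × Fin d, (A p.1 p.2) ^ 2) * γ := by
          refine mul_le_mul (Real.sqrt_le_sqrt h4) ?_ (Real.sqrt_nonneg _) (Real.sqrt_nonneg _)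
          rw [h2]; exact hM
      _ = Λ * γ * Real.sqrt (∑ r, ∑ s, (∑ i, sgn (σ i) * ((1 - z i r) * x i s)) ^ 2) := by
          rw [Real.sqrt_mul (sq_nonneg Λ), Real.sqrt_sq hΛ, h3]; ring

/-- Empirical Rademacher complexity bound for the (non-relaxed) imputation class
`𝒢 = {(x,z) ↦ wᵀ(x + diag(1−z)Mᵀx) : ‖w‖ ≤ Λ, ‖M‖_F ≤ γ}`:
`(1/T)·E_σ[sup_{w,M} |Σ_i σ_i wᵀ(x_i + diag(1−z_i)Mᵀx_i)|] ≤ (1 + γ√d)ΛR/√T`. -/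
theorem rademacher_complexity_G {d T : ℕ} (hT : 0 < T)
    (x z : Fin T → Fin d → ℝ) (R Λ γ : ℝ) (hΛ : 0 ≤ Λ) (hγ : 0 ≤ γ)
    (hx : ∀ i, enorm' (x i) ≤ R) (hz : ∀ i s, z i s = 0 ∨ z i s = 1) :
    (1 / (T : ℝ)) *
      ((∑ σ : Fin T → Bool,
          ⨆ p : {w : Fin d → ℝ // enorm' w ≤ Λ} ×
                {M : Matrix (Fin d) (Fin d) ℝ // frobNorm M ≤ γ},
            |∑ i, sgn (σ i) *
              (∑ r, p.1.1 r * (x i r + (1 - z i r) * ∑ s, p.2.1 s r * x i s))|)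
        / 2 ^ T)
      ≤ (1 + γ * Real.sqrt d) * Λ * R / Real.sqrt T := by
  have hTpos : (0:ℝ) < T := by exact_mod_cast hT
  have hR : 0 ≤ R := le_trans (Real.sqrt_nonneg _) (hx ⟨0, hT⟩)
  have hxsq : ∀ i, ∑ r, x i r ^ 2 ≤ R ^ 2 := fun i =>
    sq_le_of_sqrt_le (by positivity) (hx i)
  -- per-σ bound on sup
  have hsup : ∀ σ : Fin T → Bool,
      (⨆ p : {w : Fin d → ℝ // enorm' w ≤ Λ} ×
             {M : Matrix (Fin d) (Fin d) ℝ // frobNorm M ≤ γ},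
        |∑ i, sgn (σ i) *
          (∑ r, p.1.1 r * (x i r + (1 - z i r) * ∑ s, p.2.1 s r * x i s))|)
      ≤ Λ * Real.sqrt (∑ r, (∑ i, sgn (σ i) * x i r) ^ 2)
        + Λ * γ * Real.sqrt (∑ r, ∑ s, (∑ i, sgn (σ i) * ((1 - z i r) * x i s)) ^ 2) := by
    intro σ
    refine Real.iSup_le (fun p => ?_) (by positivity)
    exact per_sigma x z Λ γ p.1.1 p.2.1 σ p.1.2 p.2.2
  -- expectation of squared norms
  have hFsum : ∑ σ : Fin T → Bool, (∑ r, (∑ i, sgn (σ i) * x i r) ^ 2)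
      ≤ 2 ^ T * (T * R ^ 2) := by
    rw [Finset.sum_comm]
    calc ∑ r, ∑ σ : Fin T → Bool, (∑ i, sgn (σ i) * x i r) ^ 2
        = ∑ r, 2 ^ T * ∑ i, x i r ^ 2 :=
          Finset.sum_congr rfl fun r _ => sum_sq_sgn _
      _ = 2 ^ T * ∑ i, ∑ r, x i r ^ 2 := by rw [← Finset.mul_sum, Finset.sum_comm]
      _ ≤ 2 ^ T * (T * R ^ 2) := by
          refine mul_le_mul_of_nonneg_left ?_ (by positivity)
          calc ∑ i : Fin T, ∑ r, x i r ^ 2 ≤ ∑ _i : Fin T, R ^ 2 :=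
                Finset.sum_le_sum fun i _ => hxsq i
            _ = T * R ^ 2 := by simp [mul_comm]
  have hGsum : ∑ σ : Fin T → Bool,
        (∑ r, ∑ s, (∑ i, sgn (σ i) * ((1 - z i r) * x i s)) ^ 2)
      ≤ 2 ^ T * (d * (T * R ^ 2)) := by
    rw [Finset.sum_comm]
    have e : ∀ r : Fin d, ∑ σ : Fin T → Bool, ∑ s, (∑ i, sgn (σ i) * ((1 - z i r) * x i s)) ^ 2
        = 2 ^ T * ∑ i, ∑ s, ((1 - z i r) * x i s) ^ 2 := by
      intro r
      rw [Finset.sum_comm]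
      calc ∑ s, ∑ σ : Fin T → Bool, (∑ i, sgn (σ i) * ((1 - z i r) * x i s)) ^ 2
          = ∑ s, 2 ^ T * ∑ i, ((1 - z i r) * x i s) ^ 2 :=
            Finset.sum_congr rfl fun s _ => sum_sq_sgn _
        _ = 2 ^ T * ∑ i, ∑ s, ((1 - z i r) * x i s) ^ 2 := by
            rw [← Finset.mul_sum, Finset.sum_comm]
    simp only [e]
    rw [← Finset.mul_sum]
    refine mul_le_mul_of_nonneg_left ?_ (by positivity)
    calc ∑ r : Fin d, ∑ i, ∑ s, ((1 - z i r) * x i s) ^ 2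
        ≤ ∑ _r : Fin d, ((T : ℝ) * R ^ 2) := ?_
      _ = d * (T * R ^ 2) := by simp [mul_comm]
    refine Finset.sum_le_sum fun r _ => ?_
    calc ∑ i : Fin T, ∑ s, ((1 - z i r) * x i s) ^ 2
        ≤ ∑ _i : Fin T, R ^ 2 := ?_
      _ = T * R ^ 2 := by simp [mul_comm]
    refine Finset.sum_le_sum fun i _ => ?_
    have hz1 : (1 - z i r) ^ 2 ≤ 1 := by
      rcases hz i r with h | h <;> simp [h]
    calc ∑ s, ((1 - z i r) * x i s) ^ 2
        = (1 - z i r) ^ 2 * ∑ s, x i s ^ 2 := by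
          rw [Finset.mul_sum]; exact Finset.sum_congr rfl fun s _ => by ring
      _ ≤ 1 * R ^ 2 := mul_le_mul hz1 (hxsq i) (by positivity) one_pos.le
      _ = R ^ 2 := one_mul _
  -- Jensen step
  have cardeq : ((Fintype.card (Fin T → Bool) : ℝ)) = 2 ^ T := by
    simp [Fintype.card_fun]
  have h2Tnn : (0:ℝ) ≤ 2 ^ T := by positivity
  have jF : ∑ σ : Fin T → Bool, Real.sqrt (∑ r, (∑ i, sgn (σ i) * x i r) ^ 2)
      ≤ 2 ^ T * (R * Real.sqrt T) := by
    calc ∑ σ : Fin T → Bool, Real.sqrt (∑ r, (∑ i, sgn (σ i) * x i r) ^ 2)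
        ≤ Real.sqrt (Fintype.card (Fin T → Bool))
            * Real.sqrt (∑ σ : Fin T → Bool, ∑ r, (∑ i, sgn (σ i) * x i r) ^ 2) :=
          sum_sqrt_le_card _ (fun σ => by positivity)
      _ ≤ Real.sqrt (2 ^ T) * Real.sqrt (2 ^ T * (T * R ^ 2)) := by
          rw [cardeq]
          exact mul_le_mul_of_nonneg_left (Real.sqrt_le_sqrt hFsum) (Real.sqrt_nonneg _)
      _ = 2 ^ T * (R * Real.sqrt T) := by
          rw [Real.sqrt_mul h2Tnn, ← mul_assoc, Real.mul_self_sqrt h2Tnn,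
            Real.sqrt_mul (Nat.cast_nonneg T), Real.sqrt_sq hR]
          ring
  have jG : ∑ σ : Fin T → Bool,
        Real.sqrt (∑ r, ∑ s, (∑ i, sgn (σ i) * ((1 - z i r) * x i s)) ^ 2)
      ≤ 2 ^ T * (Real.sqrt d * (R * Real.sqrt T)) := by
    calc ∑ σ : Fin T → Bool,
          Real.sqrt (∑ r, ∑ s, (∑ i, sgn (σ i) * ((1 - z i r) * x i s)) ^ 2)
        ≤ Real.sqrt (Fintype.card (Fin T → Bool))
            * Real.sqrt (∑ σ : Fin T → Bool,
                ∑ r, ∑ s, (∑ i, sgn (σ i) * ((1 - z i r) * x i s)) ^ 2) :=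
          sum_sqrt_le_card _ (fun σ => by positivity)
      _ ≤ Real.sqrt (2 ^ T) * Real.sqrt (2 ^ T * (d * (T * R ^ 2))) := by
          rw [cardeq]
          exact mul_le_mul_of_nonneg_left (Real.sqrt_le_sqrt hGsum) (Real.sqrt_nonneg _)
      _ = 2 ^ T * (Real.sqrt d * (R * Real.sqrt T)) := by
          rw [Real.sqrt_mul h2Tnn, ← mul_assoc, Real.mul_self_sqrt h2Tnn,
            Real.sqrt_mul (Nat.cast_nonneg d), Real.sqrt_mul (Nat.cast_nonneg T),
            Real.sqrt_sq hR]
          ring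
  -- combine
  have hsum : (∑ σ : Fin T → Bool,
      ⨆ p : {w : Fin d → ℝ // enorm' w ≤ Λ} ×
            {M : Matrix (Fin d) (Fin d) ℝ // frobNorm M ≤ γ},
        |∑ i, sgn (σ i) *
          (∑ r, p.1.1 r * (x i r + (1 - z i r) * ∑ s, p.2.1 s r * x i s))|)
      ≤ 2 ^ T * ((1 + γ * Real.sqrt d) * Λ * R * Real.sqrt T) := by
    calc _ ≤ ∑ σ : Fin T → Bool,
          (Λ * Real.sqrt (∑ r, (∑ i, sgn (σ i) * x i r) ^ 2)
            + Λ * γ * Real.sqrt (∑ r, ∑ s, (∑ i, sgn (σ i) * ((1 - z i r) * x i s)) ^ 2)) :=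
        Finset.sum_le_sum fun σ _ => hsup σ
      _ = Λ * (∑ σ : Fin T → Bool, Real.sqrt (∑ r, (∑ i, sgn (σ i) * x i r) ^ 2))
          + Λ * γ * (∑ σ : Fin T → Bool,
              Real.sqrt (∑ r, ∑ s, (∑ i, sgn (σ i) * ((1 - z i r) * x i s)) ^ 2)) := by
        rw [Finset.sum_add_distrib, ← Finset.mul_sum, ← Finset.mul_sum]
      _ ≤ Λ * (2 ^ T * (R * Real.sqrt T))
          + Λ * γ * (2 ^ T * (Real.sqrt d * (R * Real.sqrt T))) := by
        refine add_le_add (mul_le_mul_of_nonneg_left jF hΛ)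
          (mul_le_mul_of_nonneg_left jG (by positivity))
      _ = 2 ^ T * ((1 + γ * Real.sqrt d) * Λ * R * Real.sqrt T) := by ring
  have h2Tpos : (0:ℝ) < 2 ^ T := by positivity
  have hsT : (0:ℝ) < Real.sqrt T := Real.sqrt_pos.mpr hTpos
  calc (1 / (T : ℝ)) * ((∑ σ : Fin T → Bool,
          ⨆ p : {w : Fin d → ℝ // enorm' w ≤ Λ} ×
                {M : Matrix (Fin d) (Fin d) ℝ // frobNorm M ≤ γ},
            |∑ i, sgn (σ i) *
              (∑ r, p.1.1 r * (x i r + (1 - z i r) * ∑ s, p.2.1 s r * x i s))|) / 2 ^ T)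
      ≤ (1 / (T : ℝ)) * ((2 ^ T * ((1 + γ * Real.sqrt d) * Λ * R * Real.sqrt T)) / 2 ^ T) := by
        gcongr
    _ = (1 + γ * Real.sqrt d) * Λ * R / Real.sqrt T := by
        rw [mul_comm ((2:ℝ)^T) _, mul_div_assoc, div_self (ne_of_gt h2Tpos), mul_one,
          one_div, inv_mul_eq_div, div_eq_div_iff (ne_of_gt hTpos) (ne_of_gt hsT)]
        have hT2 : Real.sqrt T * Real.sqrt T = (T:ℝ) := Real.mul_self_sqrt hTpos.le
        linear_combination ((1 + γ * Real.sqrt d) * Λ * R) * hT2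

end
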